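/- arXiv:2509.17756 — 5 statements merged into one kernel-verified Lean document; each statement's English description precedes it below -/
import Mathlib

section
/- Let G be a connected graph on n vertices and let S be a subset of V(G) such that every pair of distinct vertices in S has distance at least 2ℓ-1 in G, where ℓ ≥ 1. Then |S| ≤ max{⌊n/ℓ⌋, 1}. -/
/-!
The balls of radius `ℓ - 1` around the points of `S` are pairwise disjoint, since two of them
meeting would put their centres at distance at most `2ℓ - 2`. When `|S| ≥ 2`, every point of `S`
has another point of `S` at distance at least `ℓ - 1`, and a shortest path towards it meets the
ball in vertices at each distance `0, …, ℓ - 1`; so each ball has at least `ℓ` vertices and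
`|S| ℓ ≤ n`.
-/

open Finset

namespace SimpleGraph

variable {V : Type*} {G : SimpleGraph V} {u v : V}

lemma Walk.dist_getVert_of_length_eq_dist (p : G.Walk u v) (hp : p.length = G.dist u v)
    {i : ℕ} (hi : i ≤ p.length) : G.dist u (p.getVert i) = i := by
  have hprefix : G.dist u (p.getVert i) ≤ i := by
    simpa [Walk.take_length, hi] using dist_le (p.take i)
  have hsuffix : G.dist (p.getVert i) v ≤ p.length - i := by
    simpa [Walk.drop_length] using dist_le (p.drop i)
  have htriangle := (p.take i).reachable.dist_triangle_left v
  omega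

lemma exists_dist_eq_of_le_dist {i : ℕ} (hi : i ≤ G.dist u v) : ∃ x, G.dist u x = i := by
  by_cases huv : G.Reachable u v
  · obtain ⟨p, hp⟩ := huv.exists_walk_length_eq_dist
    exact ⟨p.getVert i, p.dist_getVert_of_length_eq_dist hp (hp ▸ hi)⟩
  · exact ⟨u, by simp [dist_eq_zero_of_not_reachable huv] at hi; simp [hi]⟩

variable [Fintype V]

lemma le_card_filter_dist_lt {ℓ : ℕ} (h : ℓ - 1 ≤ G.dist u v) :
    ℓ ≤ #{x | G.dist u x < ℓ} := by
  have hrange : range ℓ ⊆ image (G.dist u) {x | G.dist u x < ℓ} := by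
    intro i hi
    obtain ⟨x, hx⟩ := exists_dist_eq_of_le_dist (show i ≤ G.dist u v by grind)
    exact mem_image.mpr ⟨x, by simpa [hx] using hi, hx⟩
  simpa using (card_le_card hrange).trans card_image_le

lemma Connected.disjoint_filter_dist_lt (hG : G.Connected) {ℓ : ℕ}
    (h : 2 * ℓ - 1 ≤ G.dist u v) :
    Disjoint ({x | G.dist u x < ℓ} : Finset V) ({x | G.dist v x < ℓ} : Finset V) := by
  refine Finset.disjoint_left.mpr fun x hux hvx => ?_
  simp only [mem_filter, mem_univ, true_and] at hux hvx
  have htriangle : G.dist u v ≤ G.dist u x + G.dist x v := hG.dist_triangle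
  rw [dist_comm (u := x)] at htriangle
  omega

end SimpleGraph

/-- Jiang's Lemma 1: In a connected graph `G` on `n` vertices, any set `S`
of vertices with pairwise distance at least `2ℓ - 1` satisfies `|S| ≤ max (⌊n/ℓ⌋) 1`. -/
theorem stmt_0 {V : Type*} [Fintype V] (G : SimpleGraph V) (hG : G.Connected)
    (ℓ : ℕ) (hℓ : 1 ≤ ℓ) (S : Finset V)
    (hS : ∀ u ∈ S, ∀ v ∈ S, u ≠ v → 2 * ℓ - 1 ≤ G.dist u v) :
    S.card ≤ max (Fintype.card V / ℓ) 1 := by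
  classical
  rcases le_or_gt #S 1 with hS1 | hS1
  · exact le_max_of_le_right hS1
  refine le_max_of_le_left ((Nat.le_div_iff_mul_le hℓ).mpr ?_)
  have hball : ∀ s ∈ S, ℓ ≤ #{x | G.dist s x < ℓ} := fun s hs => by
    obtain ⟨t, ht, hts⟩ := S.exists_mem_ne hS1 s
    exact SimpleGraph.le_card_filter_dist_lt (v := t) (by grind)
  have hdisjoint : (S : Set V).PairwiseDisjoint fun s => ({x | G.dist s x < ℓ} : Finset V) :=
    fun s hs t ht hst => hG.disjoint_filter_dist_lt (hS s hs t ht hst)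
  calc #S * ℓ ≤ ∑ s ∈ S, #{x | G.dist s x < ℓ} := by
        simpa [mul_comm] using card_nsmul_le_sum S _ ℓ hball
    _ = #(S.biUnion fun s => {x | G.dist s x < ℓ}) := (card_biUnion hdisjoint).symm
    _ ≤ Fintype.card V := card_le_univ _
end

section
/- Let T be a tree and x a leaf of its skeleton S(T) (a penultimate vertex). If the diameter of T is at least 2ℓ+1, then T - x consists of some isolated vertices together with exactly one component whose diameter is at least 2ℓ-1. -/
/-!
A penultimate vertex `x` has a single neighbour `y` in the skeleton; every other neighbour of
`x` is a leaf hanging at `x`. A shortest path from `x` to any other vertex `a` leaves `x`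
through one neighbour and never returns, so in `T - x` the vertex `a` lies in the component of
that neighbour. Hence `T - x` is the component of `y` together with the isolated hanging leaves.
Moving each end of a diametral path to `y` when it is at distance at most one from `x` costs at
most two in total, which leaves two vertices of the component of `y` at distance at least
`2ℓ - 1`; distances in `T - x` are at least those in `T`.
-/

open Finset

/-- The skeleton of a tree `G`: the subgraph induced on the non-leaf vertices. -/
abbrev skeletonSet {V : Type*} [Fintype V] [DecidableEq V] (G : SimpleGraph V)
    [DecidableRel G.Adj] : Set V := {v : V | 2 ≤ G.degree v}

abbrev skeleton {V : Type*} [Fintype V] [DecidableEq V] (G : SimpleGraph V)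
    [DecidableRel G.Adj] : SimpleGraph (skeletonSet G) := G.induce (skeletonSet G)

namespace SimpleGraph

variable {V : Type*} {G : SimpleGraph V}

lemma Reachable.dist_map_le {W : Type*} {G' : SimpleGraph W} (f : G →g G') {u v : V}
    (h : G.Reachable u v) : G'.dist (f u) (f v) ≤ G.dist u v := by
  obtain ⟨p, hp⟩ := h.exists_walk_length_eq_dist
  calc G'.dist (f u) (f v) ≤ (p.map f).length := dist_le _
    _ = G.dist u v := by rw [Walk.length_map, hp]

lemma exists_adj_neighborSet_subset_of_skeleton_degree_eq_one [Fintype V] [DecidableEq V]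
    [DecidableRel G.Adj] {x : skeletonSet G} (hx : (skeleton G).degree x = 1) :
    ∃ y, G.Adj x y ∧ ∀ w, G.Adj x w → w ≠ y → G.neighborSet w ⊆ {(x : V)} := by
  obtain ⟨y, hxy, hy⟩ := degree_eq_one_iff_existsUnique_adj.mp hx
  refine ⟨y, hxy, fun w hxw hwy b hwb => ?_⟩
  have hw : G.degree w ≤ 1 := by
    by_contra! hw
    exact hwy (congrArg Subtype.val (hy ⟨w, hw⟩ hxw))
  rw [← card_neighborFinset_eq_degree] at hw
  exact card_le_one.mp hw b (by simpa using hwb) x (by simpa using hxw.symm)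

section DeleteVertex

variable {x y : V}

lemma Connected.exists_adj_reachable_induce_ne (hG : G.Connected) {a : V} (ha : a ≠ x) :
    ∃ w, ∃ hxw : G.Adj x w, (G.induce {v | v ≠ x}).Reachable ⟨w, hxw.ne'⟩ ⟨a, ha⟩ := by
  obtain ⟨p, hp⟩ := hG.preconnected.exists_isPath x a
  cases p with
  | nil => exact absurd rfl ha
  | cons hxw q =>
    have hxq : x ∉ q.support := (Walk.cons_isPath_iff _ _).mp hp |>.2
    exact ⟨_, hxw, ⟨q.induce {v | v ≠ x} fun z hz hzx => hxq (hzx ▸ hz)⟩⟩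

lemma Connected.reachable_induce_ne_or_neighborSet_subset (hG : G.Connected) (hxy : G.Adj x y)
    (hleaf : ∀ w, G.Adj x w → w ≠ y → G.neighborSet w ⊆ {x}) (a : {v // v ≠ x}) :
    (G.induce {v | v ≠ x}).Reachable ⟨y, hxy.ne'⟩ a ∨ (G.Adj x a ∧ G.neighborSet a ⊆ {x}) := by
  obtain ⟨w, hxw, hwa⟩ := hG.exists_adj_reachable_induce_ne a.2
  by_cases hwy : w = y
  · subst hwy
    exact .inl hwa
  · refine .inr ?_
    by_cases hwa' : (⟨w, hxw.ne'⟩ : {v // v ≠ x}) = a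
    · rw [← hwa']
      exact ⟨hxw, hleaf w hxw hwy⟩
    · obtain ⟨b, hwb⟩ := hwa.nonempty_neighborSet_left hwa'
      exact absurd (hleaf w hxw hwy hwb) b.2

lemma Connected.reachable_induce_ne_of_reachable (hG : G.Connected) (hxy : G.Adj x y)
    (hleaf : ∀ w, G.Adj x w → w ≠ y → G.neighborSet w ⊆ {x}) {a b : {v // v ≠ x}}
    (hab : (G.induce {v | v ≠ x}).Reachable a b) (hne : a ≠ b) :
    (G.induce {v | v ≠ x}).Reachable ⟨y, hxy.ne'⟩ a := by
  refine (hG.reachable_induce_ne_or_neighborSet_subset hxy hleaf a).resolve_right ?_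
  rintro ⟨-, ha⟩
  obtain ⟨c, hac⟩ := hab.nonempty_neighborSet_left hne
  exact c.2 (ha hac)

lemma Connected.reachable_induce_ne_of_one_lt_dist (hG : G.Connected) (hxy : G.Adj x y)
    (hleaf : ∀ w, G.Adj x w → w ≠ y → G.neighborSet w ⊆ {x}) {a : V} (ha : 1 < G.dist a x) :
    ∃ hax : a ≠ x, (G.induce {v | v ≠ x}).Reachable ⟨y, hxy.ne'⟩ ⟨a, hax⟩ := by
  have hax : a ≠ x := by rintro rfl; simp at ha
  refine ⟨hax, (hG.reachable_induce_ne_or_neighborSet_subset hxy hleaf ⟨a, hax⟩).resolve_right ?_⟩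
  rintro ⟨hxa, -⟩
  rw [dist_comm, dist_eq_one_iff_adj.mpr hxa] at ha
  exact lt_irrefl 1 ha

lemma Connected.exists_reachable_induce_ne_dist_le (hG : G.Connected) (hxy : G.Adj x y)
    (hleaf : ∀ w, G.Adj x w → w ≠ y → G.neighborSet w ⊆ {x}) (u v : V) :
    ∃ u' v' : {v // v ≠ x}, (G.induce {v | v ≠ x}).Reachable ⟨y, hxy.ne'⟩ u' ∧
      (G.induce {v | v ≠ x}).Reachable ⟨y, hxy.ne'⟩ v' ∧ G.dist u v ≤ G.dist u' v' + 2 := by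
  have hy := Reachable.refl (G := G.induce {v | v ≠ x}) ⟨y, hxy.ne'⟩
  have near_y {a : V} (ha : G.dist a x ≤ 1) : G.dist a y ≤ 2 := by
    have := hG.dist_triangle (u := a) (v := x) (w := y)
    rw [dist_eq_one_iff_adj.mpr hxy] at this
    omega
  by_cases hu : 1 < G.dist u x <;> by_cases hv : 1 < G.dist v x
  · obtain ⟨hu', hyu⟩ := hG.reachable_induce_ne_of_one_lt_dist hxy hleaf hu
    obtain ⟨hv', hyv⟩ := hG.reachable_induce_ne_of_one_lt_dist hxy hleaf hv
    exact ⟨⟨u, hu'⟩, ⟨v, hv'⟩, hyu, hyv, Nat.le_add_right _ _⟩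
  · obtain ⟨hu', hyu⟩ := hG.reachable_induce_ne_of_one_lt_dist hxy hleaf hu
    refine ⟨⟨u, hu'⟩, ⟨y, hxy.ne'⟩, hyu, hy, ?_⟩
    have := hG.dist_triangle (u := u) (v := y) (w := v)
    have := near_y (not_lt.mp hv)
    rw [dist_comm (u := v)] at this
    show G.dist u v ≤ G.dist u y + 2
    omega
  · obtain ⟨hv', hyv⟩ := hG.reachable_induce_ne_of_one_lt_dist hxy hleaf hv
    refine ⟨⟨y, hxy.ne'⟩, ⟨v, hv'⟩, hy, hyv, ?_⟩
    have := hG.dist_triangle (u := u) (v := y) (w := v)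
    have := near_y (not_lt.mp hu)
    show G.dist u v ≤ G.dist y v + 2
    omega
  · refine ⟨⟨y, hxy.ne'⟩, ⟨y, hxy.ne'⟩, hy, hy, ?_⟩
    have := hG.dist_triangle (u := u) (v := x) (w := v)
    rw [dist_comm (u := x)] at this
    show G.dist u v ≤ G.dist y y + 2
    omega

end DeleteVertex

end SimpleGraph

open SimpleGraph in
theorem stmt_10_general {V : Type*} [Fintype V] [DecidableEq V] (G : SimpleGraph V)
    [DecidableRel G.Adj] (hT : G.IsTree) (ℓ : ℕ)
    (x : skeletonSet G) (hx : (skeleton G).degree x = 1)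
    (hdiam : ∃ u v : V, 2 * ℓ + 1 ≤ G.dist u v) :
    ∃ c : (G.induce {v : V | v ≠ ↑x}).ConnectedComponent,
      (∃ u v : {v : V // v ≠ ↑x},
        (G.induce {v : V | v ≠ ↑x}).connectedComponentMk u = c ∧
        (G.induce {v : V | v ≠ ↑x}).connectedComponentMk v = c ∧
        2 * ℓ - 1 ≤ (G.induce {v : V | v ≠ ↑x}).dist u v) ∧
      ∀ c' : (G.induce {v : V | v ≠ ↑x}).ConnectedComponent, c' ≠ c →
        ∀ u v : {v : V // v ≠ ↑x},
          (G.induce {v : V | v ≠ ↑x}).connectedComponentMk u = c' →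
          (G.induce {v : V | v ≠ ↑x}).connectedComponentMk v = c' → u = v := by
  obtain ⟨y, hxy, hleaf⟩ := exists_adj_neighborSet_subset_of_skeleton_degree_eq_one hx
  obtain ⟨u, v, huv⟩ := hdiam
  obtain ⟨u', v', hu', hv', hdist⟩ :=
    hT.connected.exists_reachable_induce_ne_dist_le hxy hleaf u v
  have hdist' : G.dist u' v' ≤ (G.induce {v : V | v ≠ ↑x}).dist u' v' :=
    (hu'.symm.trans hv').dist_map_le (Embedding.induce _).toHom
  refine ⟨_, ⟨u', v', (ConnectedComponent.sound hu').symm, (ConnectedComponent.sound hv').symm,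
    by omega⟩, ?_⟩
  intro c' hc' a b ha hb
  by_contra hab
  have hya := hT.connected.reachable_induce_ne_of_reachable hxy hleaf
    (ConnectedComponent.exact (ha.trans hb.symm)) hab
  exact hc' (ha ▸ (ConnectedComponent.sound hya).symm)

/-- Let `T` be a tree of diameter at least `2ℓ+1` and `x` a penultimate
vertex (a leaf of the skeleton `S(T)`).  Then `T - x` consists of isolated vertices together
with exactly one component of diameter at least `2ℓ-1`. -/
theorem stmt_10 {V : Type*} [Fintype V] [DecidableEq V] (G : SimpleGraph V)
    [DecidableRel G.Adj] (hT : G.IsTree) (ℓ : ℕ) (hℓ : 1 ≤ ℓ)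
    (x : skeletonSet G) (hx : (skeleton G).degree x = 1)
    (hdiam : ∃ u v : V, 2 * ℓ + 1 ≤ G.dist u v) :
    ∃ c : (G.induce {v : V | v ≠ ↑x}).ConnectedComponent,
      (∃ u v : {v : V // v ≠ ↑x},
        (G.induce {v : V | v ≠ ↑x}).connectedComponentMk u = c ∧
        (G.induce {v : V | v ≠ ↑x}).connectedComponentMk v = c ∧
        2 * ℓ - 1 ≤ (G.induce {v : V | v ≠ ↑x}).dist u v) ∧
      ∀ c' : (G.induce {v : V | v ≠ ↑x}).ConnectedComponent, c' ≠ c →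
        ∀ u v : {v : V // v ≠ ↑x},
          (G.induce {v : V | v ≠ ↑x}).connectedComponentMk u = c' →
          (G.induce {v : V | v ≠ ↑x}).connectedComponentMk v = c' → u = v :=
  stmt_10_general G hT ℓ x hx hdiam
end

section
/- Let T be a tree in which every internal vertex of every longest path of the skeleton S(T) has degree at least 3 in S(T) (i.e., S(T) has no vertex of degree 2), and suppose S(T) has at most ℓ-1 leaves, where ℓ ≥ 3. Then the diameter of S(T) is at most ℓ-2, and hence the diameter of T is at most ℓ. -/
/-!
Every internal vertex of a path has degree at least `2`; in the skeleton, which has no vertex of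
degree `2`, the internal vertices of a path are therefore distinct vertices of degree at least `3`.
Summing `deg v - 2` over a tree gives `-2`, so a tree with `t` leaves has at most `t - 2` such
vertices, and every path in the skeleton has length at most `t - 1 ≤ ℓ - 2`. A shortest path of
`T` of length at least `3` loses only its two end edges when its endpoints are cut off, and what
remains runs through the skeleton, so it has length at most `ℓ - 2 + 2`.
-/

open Finset

namespace SimpleGraph

variable {V : Type*} {G : SimpleGraph V}

lemma Walk.IsPath.two_le_degree_getVert [G.LocallyFinite] {u v : V} {p : G.Walk u v}
    (hp : p.IsPath) {i : ℕ} (hi₀ : 0 < i) (hi : i < p.length) : 2 ≤ G.degree (p.getVert i) := by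
  have hprev : G.Adj (p.getVert i) (p.getVert (i - 1)) := by
    simpa [Nat.sub_add_cancel hi₀] using (p.adj_getVert_succ (i := i - 1) (by omega)).symm
  have hne : p.getVert (i - 1) ≠ p.getVert (i + 1) := fun h =>
    absurd (hp.getVert_injOn (by simp; omega) (by simp; omega) h) (by omega)
  rw [← card_neighborFinset_eq_degree]
  exact one_lt_card.2 ⟨_, (mem_neighborFinset ..).2 hprev, _,
    (mem_neighborFinset ..).2 (p.adj_getVert_succ hi), hne⟩

variable [Fintype V] [DecidableRel G.Adj]

lemma Walk.IsPath.length_le_card_three_le_degree_add_one (hdeg : ∀ v, G.degree v ≠ 2)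
    {u v : V} {p : G.Walk u v} (hp : p.IsPath) : p.length ≤ #{x | 3 ≤ G.degree x} + 1 := by
  have hinternal := card_le_card_of_injOn p.getVert (s := Ioo 0 p.length)
    (t := {x | 3 ≤ G.degree x})
    (fun i hi => by
      rw [coe_Ioo, Set.mem_Ioo] at hi
      have := hp.two_le_degree_getVert hi.1 hi.2
      have := hdeg (p.getVert i)
      simp only [coe_filter, mem_univ, true_and, Set.mem_ofPred_eq]
      omega)
    (hp.getVert_injOn.mono fun i hi => by simp at hi ⊢; omega)
  rw [Nat.card_Ioo] at hinternal
  omega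

lemma IsTree.card_three_le_degree_add_two_le [Nontrivial V] (hG : G.IsTree) :
    #{v | 3 ≤ G.degree v} + 2 ≤ #{v | G.degree v = 1} := by
  have hpos := hG.connected.preconnected.degree_pos_of_nontrivial
  have key : ∑ v, (2 + if 3 ≤ G.degree v then 1 else 0) ≤
      ∑ v, (G.degree v + if G.degree v = 1 then 1 else 0) :=
    sum_le_sum fun v _ => by have := hpos v; split_ifs <;> omega
  rw [sum_add_distrib, sum_add_distrib, ← card_filter, ← card_filter, sum_const, card_univ,
    sum_degrees_eq_twice_card_edges, ← hG.card_edgeFinset, smul_eq_mul] at key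
  omega

lemma IsTree.dist_le_card_degree_eq_one_sub_one (hG : G.IsTree) (hdeg : ∀ v, G.degree v ≠ 2)
    (u v : V) : G.dist u v ≤ #{x | G.degree x = 1} - 1 := by
  obtain ⟨p, hp, hlen⟩ := hG.connected.exists_path_of_dist u v
  rcases eq_or_ne u v with rfl | huv
  · simp
  have : Nontrivial V := ⟨u, v, huv⟩
  have := hp.length_le_card_three_le_degree_add_one hdeg
  have := hG.card_three_le_degree_add_two_le
  omega

variable [DecidableEq V]

lemma Preconnected.skeleton (hG : G.Preconnected) : (skeleton G).Preconnected :=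
  hG.induce_of_degree_eq_one fun v hv x hx y hy => by
    have hcard : #(G.neighborFinset v) ≤ 1 := by
      rw [card_neighborFinset_eq_degree]
      simp only [Set.mem_ofPred_eq, not_le] at hv
      omega
    exact card_le_one.1 hcard x (by simpa using hx) y (by simpa using hy)

lemma IsTree.skeleton (hG : G.IsTree) [Nonempty (skeletonSet G)] : (skeleton G).IsTree :=
  ⟨⟨hG.connected.preconnected.skeleton⟩, hG.isAcyclic.induce _⟩

lemma Connected.dist_le_add_two_of_skeleton (hG : G.Connected) {d : ℕ}
    (hd : ∀ a b : skeletonSet G, (skeleton G).dist a b ≤ d) (u v : V) : G.dist u v ≤ d + 2 := by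
  obtain ⟨p, hp, hlen⟩ := hG.exists_path_of_dist u v
  by_cases hshort : p.length ≤ 2
  · omega
  set x := p.getVert 1
  set y := p.getVert (p.length - 1)
  have hux : G.Adj u x := by simpa using p.adj_getVert_succ (i := 0) (by omega)
  have hyv : G.Adj y v := by
    simpa [Nat.sub_add_cancel (by omega : 1 ≤ p.length)] using
      p.adj_getVert_succ (i := p.length - 1) (by omega)
  have hx : x ∈ skeletonSet G := hp.two_le_degree_getVert one_pos (by omega)
  have hy : y ∈ skeletonSet G := hp.two_le_degree_getVert (by omega) (by omega)
  obtain ⟨q, hq⟩ := (hG.preconnected.skeleton ⟨x, hx⟩ ⟨y, hy⟩).exists_walk_length_eq_dist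
  have hxy : G.dist x y ≤ d := calc
    G.dist x y ≤ (q.map (Embedding.induce _).toHom).length := dist_le _
    _ = (skeleton G).dist ⟨x, hx⟩ ⟨y, hy⟩ := by rw [Walk.length_map, hq]
    _ ≤ d := hd _ _
  have := hG.dist_triangle (u := u) (v := x) (w := v)
  have := hG.dist_triangle (u := x) (v := y) (w := v)
  have := dist_eq_one_iff_adj.2 hux
  have := dist_eq_one_iff_adj.2 hyv
  omega

end SimpleGraph

/-- Let `T` be a tree whose skeleton `S(T)` has no vertex of degree 2 and
at most `ℓ - 1` leaves, where `ℓ ≥ 3`.  Then the diameter of `S(T)` is at most `ℓ - 2`, and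
hence the diameter of `T` is at most `ℓ`. -/
theorem stmt_12 {V : Type*} [Fintype V] [DecidableEq V] (G : SimpleGraph V)
    [DecidableRel G.Adj] (hT : G.IsTree) (ℓ : ℕ) (hℓ : 3 ≤ ℓ)
    (hdeg2 : ∀ x : skeletonSet G, (skeleton G).degree x ≠ 2)
    (hleaves : {x : skeletonSet G | (skeleton G).degree x = 1}.ncard ≤ ℓ - 1) :
    (∀ a b : skeletonSet G, (skeleton G).dist a b ≤ ℓ - 2) ∧
    (∀ u v : V, G.dist u v ≤ ℓ) := by
  have hskeleton : ∀ a b : skeletonSet G, (skeleton G).dist a b ≤ ℓ - 2 := fun a b => by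
    have : Nonempty (skeletonSet G) := ⟨a⟩
    have := hT.skeleton.dist_le_card_degree_eq_one_sub_one hdeg2 a b
    rw [Set.ncard_eq_toFinset_card', Set.toFinset_ofPred] at hleaves
    omega
  exact ⟨hskeleton, fun u v => (hT.connected.dist_le_add_two_of_skeleton hskeleton u v).trans
    (by omega)⟩
end

section
/- For every pair of integers d ≥ 2 and g ≥ 3 there exists a d-regular graph with girth exactly g. -/
/-!
Erdős–Sachs by an extremal argument. Fix an even `n` that is large compared with `(d + 1) ^ g`
and, among the graphs on `n` vertices with girth exactly `g` and all degrees at most `d` (a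
`g`-cycle together with isolated vertices is one), take one, `G`, with the most edges. Adding an
edge `ab` creates only cycles of length at least `dist(a, b) + 1`, so it keeps the girth when `a`
and `b` are far apart. If `G` were not `d`-regular, the parity of the degree sum would give
deficient vertices `u`, `v` (or one vertex `u = v` of deficiency two). A ball of radius `g` has
at most `(d + 1) ^ g` vertices, so some vertex `x` lies at distance at least `g` from `u` and `v`
and off a shortest cycle. If `x` is deficient, add the edge `ux`; otherwise replace an edge `xy`
by the two edges `ux` and `vy`. Either way the girth stays `g`, no degree exceeds `d`, and the
number of edges grows, a contradiction.
-/

lemma exists_pair_le_of_even_sum {ι : Type*} [Fintype ι] [DecidableEq ι] {f : ι → ℕ}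
    (heven : Even (∑ i, f i)) {i : ι} (hi : 0 < f i) :
    ∃ j k, ∀ l, (if l = j then 1 else 0) + (if l = k then 1 else 0) ≤ f l := by
  by_cases h2 : 2 ≤ f i
  · refine ⟨i, i, fun l => ?_⟩
    by_cases hl : l = i
    · simpa [hl] using h2
    · simp [hl]
  obtain ⟨j, hji, hj⟩ : ∃ j ≠ i, 0 < f j := by
    by_contra! h
    rw [Finset.sum_eq_single i (fun l _ hl => Nat.le_zero.mp (h l hl)) (by simp),
      show f i = 1 by omega] at heven
    exact Nat.not_even_one heven
  refine ⟨i, j, fun l => ?_⟩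
  by_cases hl : l = i
  · simp only [hl, hji.symm, if_true, if_false]
    exact hi
  · by_cases hl' : l = j
    · simp only [hl', hji, if_true, if_false]
      exact hj
    · simp [hl, hl']

namespace SimpleGraph

variable {V : Type*} {G : SimpleGraph V} {a b : V}

lemma Walk.IsCycle.edist_deleteEdges_snd_add_one_le {c : G.Walk a a} (hc : c.IsCycle) :
    (G.deleteEdges {s(a, c.snd)}).edist a c.snd + 1 ≤ c.length := by
  cases c with
  | nil => exact absurd hc Walk.not_isCycle_nil
  | cons h q =>
    obtain ⟨-, hq⟩ := (Walk.cons_isCycle_iff q h).mp hc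
    rw [Walk.snd_cons, Walk.length_cons, Nat.cast_succ]
    gcongr
    simpa using edist_le (q.toDeleteEdge _ hq).reverse

lemma Walk.IsCycle.edist_deleteEdges_add_one_le {w : V} {c : G.Walk w w} (hc : c.IsCycle)
    (hab : s(a, b) ∈ c.edges) : (G.deleteEdges {s(a, b)}).edist a b + 1 ≤ c.length := by
  classical
  have ha : a ∈ c.support := c.fst_mem_support_of_mem_edges hab
  have hb : b ∈ (c.rotate a ha).toSubgraph.neighborSet a :=
    (Walk.mem_edges_toSubgraph _).mpr ((c.rotate_edges a ha).mem_iff.mpr hab)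
  rw [(hc.rotate ha).neighborSet_toSubgraph_endpoint] at hb
  rw [← Walk.length_rotate c a ha]
  rcases hb with rfl | rfl
  · exact (hc.rotate ha).edist_deleteEdges_snd_add_one_le
  · simpa [← Walk.snd_reverse] using (hc.rotate ha).reverse.edist_deleteEdges_snd_add_one_le

lemma min_egirth_edist_le_egirth_sup_edge :
    min G.egirth (G.edist a b + 1) ≤ (G ⊔ edge a b).egirth := by
  rw [le_egirth]
  intro w c hc
  by_cases hab : s(a, b) ∈ c.edges
  · calc min G.egirth (G.edist a b + 1)
        ≤ ((G ⊔ edge a b).deleteEdges {s(a, b)}).edist a b + 1 := by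
          refine min_le_of_right_le (add_le_add_left (edist_anti ?_) 1)
          intro x y hxy
          simp only [deleteEdges_adj, sup_adj, adj_edge, Set.mem_singleton_iff] at hxy
          tauto
      _ ≤ c.length := hc.edist_deleteEdges_add_one_le hab
  · have hc' : ∀ e ∈ c.edges, e ∈ G.edgeSet := by
      intro e he
      have := c.edges_subset_edgeSet he
      rw [edgeSet_sup] at this
      exact this.resolve_right fun h' => hab (edgeSet_edge_subset h' ▸ he)
    calc min G.egirth (G.edist a b + 1) ≤ G.egirth := min_le_left _ _
      _ ≤ (c.transfer G hc').length := egirth_le_length (hc.transfer hc')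
      _ = c.length := by rw [Walk.length_transfer]

lemma egirth_sup_edge (h : G.egirth ≤ G.edist a b + 1) : (G ⊔ edge a b).egirth = G.egirth :=
  le_antisymm (egirth_anti le_sup_left)
    (by simpa [min_eq_left h] using min_egirth_edist_le_egirth_sup_edge (G := G) (a := a) (b := b))

lemma egirth_le_edist_deleteEdges_add_one (h : G.Adj a b) :
    G.egirth ≤ (G.deleteEdges {s(a, b)}).edist a b + 1 := by
  classical
  rcases eq_or_ne ((G.deleteEdges {s(a, b)}).edist a b) ⊤ with htop | htop
  · simp [htop]
  obtain ⟨p, hp⟩ := exists_walk_of_edist_ne_top htop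
  have hq : s(b, a) ∉ (p.bypass.mapLe (deleteEdges_le _)).edges := by
    rw [Walk.edges_mapLe_eq_edges]
    intro hba
    simpa [Sym2.eq_swap] using p.bypass.edges_subset_edgeSet hba
  calc G.egirth ≤ (Walk.cons h.symm (p.bypass.mapLe (deleteEdges_le _))).length :=
        egirth_le_length ((Walk.cons_isCycle_iff _ _).mpr ⟨p.bypass_isPath.mapLe _, hq⟩)
    _ ≤ _ := by
        rw [← hp, Walk.length_cons, Walk.length_mapLe, Nat.cast_succ]
        gcongr
        exact p.length_bypass_le_length

lemma egirth_deleteEdges_eq {w : V} {c : G.Walk w w} (hc : c.IsCycle) (hlen : G.egirth = c.length)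
    (hab : s(a, b) ∉ c.edges) : (G.deleteEdges {s(a, b)}).egirth = G.egirth := by
  refine le_antisymm ?_ (egirth_anti (deleteEdges_le _))
  have hc' := Walk.IsCycle.toDeleteEdges G {s(a, b)} hc (by rintro e he rfl; exact hab he)
  simpa [hlen] using egirth_le_length hc'

lemma Walk.le_add_length_of_adj {f : V → ℕ∞}
    (hf : ∀ ⦃x y⦄, G.Adj x y → f x ≤ f y + 1) :
    ∀ {s t : V} (p : G.Walk s t), f s ≤ f t + p.length
  | _, _, .nil => by simp
  | _, _, .cons h p => by
    rw [Walk.length_cons, Nat.cast_succ, ← add_assoc]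
    exact (hf h).trans (add_le_add_left (p.le_add_length_of_adj hf) 1)

lemma le_add_edist_of_adj {f : V → ℕ∞} (hf : ∀ ⦃x y⦄, G.Adj x y → f x ≤ f y + 1)
    (s t : V) : f s ≤ f t + G.edist s t := by
  rcases eq_or_ne (G.edist s t) ⊤ with htop | htop
  · simp [htop]
  obtain ⟨p, hp⟩ := exists_walk_of_edist_ne_top htop
  exact hp ▸ p.le_add_length_of_adj hf

lemma min_edist_le_edist_sup_edge (s t : V) :
    min (G.edist s t) (min (G.edist a t) (G.edist b t) + 1) ≤ (G ⊔ edge a b).edist s t := by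
  set m := min (G.edist a t) (G.edist b t)
  have hf : ∀ ⦃x y⦄, (G ⊔ edge a b).Adj x y →
      min (G.edist x t) (m + 1) ≤ min (G.edist y t) (m + 1) + 1 := by
    intro x y hxy
    rw [← min_add_add_right (G.edist y t) (m + 1) 1]
    rcases hxy with hxy | hxy
    · refine min_le_min ?_ le_self_add
      calc G.edist x t ≤ G.edist x y + G.edist y t := G.edist_triangle
        _ ≤ G.edist y t + 1 := by rw [add_comm, edist_eq_one_iff_adj.mpr hxy]
    · have hm : m ≤ G.edist y t := by
        rw [edge_adj] at hxy
        rcases hxy with ⟨⟨-, rfl⟩ | ⟨-, rfl⟩, -⟩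
        exacts [min_le_right _ _, min_le_left _ _]
      exact (min_le_right _ _).trans (le_min (add_le_add_left hm 1) le_self_add)
  simpa using le_add_edist_of_adj hf s t

lemma edist_le_edist_add_one_of_adj {x y : V} (h : G.Adj y x) (u : V) :
    G.edist u x ≤ G.edist u y + 1 :=
  G.edist_triangle.trans_eq (by rw [edist_eq_one_iff_adj.mpr h])

lemma egirth_deleteEdges_sup_edge_sup_edge {u v x y : V} (hxy : G.Adj x y)
    (hH : (G.deleteEdges {s(x, y)}).egirth = G.egirth)
    (hux : G.egirth ≤ G.edist u x) (hvx : G.egirth ≤ G.edist v x) :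
    (G.deleteEdges {s(x, y)} ⊔ edge u x ⊔ edge v y).egirth = G.egirth := by
  set H := G.deleteEdges {s(x, y)}
  have hHG : ∀ s t, G.edist s t ≤ H.edist s t := fun s t => edist_anti (deleteEdges_le _)
  have hG1 : (H ⊔ edge u x).egirth = G.egirth :=
    (egirth_sup_edge (hH ▸ hux.trans ((hHG u x).trans le_self_add))).trans hH
  refine (egirth_sup_edge (hG1 ▸ ?_)).trans hG1
  -- A `v`–`y` walk using the new edge `ux` ends with an `H`-walk from `u` or `x` to `y`: the
  -- first is long as `u` is far from `x`, the second as `xy` lies on no short cycle of `G`.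
  refine le_trans ?_ (add_le_add_left (min_edist_le_edist_sup_edge v y) 1)
  rw [← min_add_add_right, ← min_add_add_right, ← min_add_add_right]
  refine le_min ?_ (le_min ?_ ?_)
  · exact hvx.trans ((edist_le_edist_add_one_of_adj hxy.symm v).trans
      (add_le_add_left (hHG v y) 1))
  · exact hux.trans ((edist_le_edist_add_one_of_adj hxy.symm u).trans
      (add_le_add_left ((hHG u y).trans le_self_add) 1))
  · exact (egirth_le_edist_deleteEdges_add_one hxy).trans (add_le_add_left le_self_add 1)

lemma Walk.IsCycle.card_toFinset_support [DecidableEq V] {c : G.Walk a a} (hc : c.IsCycle) :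
    c.support.toFinset.card = c.length := by
  rw [← c.cons_tail_support, List.toFinset_cons,
    Finset.insert_eq_of_mem (List.mem_toFinset.mpr (c.end_mem_tail_support hc.not_nil)),
    List.toFinset_card_of_nodup hc.support_nodup, List.length_tail, Walk.length_support,
    Nat.add_sub_cancel]

lemma Walk.end_mem_of_forall_adj {S : Set V} (hS : ∀ ⦃x y⦄, G.Adj x y → x ∈ S → y ∈ S)
    {x y : V} (q : G.Walk x y) (hx : x ∈ S) : y ∈ S := by
  induction q with
  | nil => exact hx
  | cons h _ ih => exact ih (hS h hx)

lemma IsCycles.mem_support_of_adj {c : G.Walk a a} (hG : G.IsCycles) (hc : c.IsCycle)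
    {x y : V} (hxy : G.Adj x y) (hx : x ∈ c.support) : y ∈ c.support := by
  have hsub : c.toSubgraph.neighborSet x ⊆ G.neighborSet x := fun z hz => c.toSubgraph.adj_sub hz
  have htwo := hc.ncard_neighborSet_toSubgraph_eq_two hx
  have heq : c.toSubgraph.neighborSet x = G.neighborSet x :=
    Set.eq_of_subset_of_ncard_le hsub (by rw [hG ⟨y, hxy⟩, htwo])
      (Set.finite_of_ncard_pos (by rw [hG ⟨y, hxy⟩]; norm_num))
  have hy : c.toSubgraph.Adj x y := (heq ▸ hxy : y ∈ c.toSubgraph.neighborSet x)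
  exact c.mem_verts_toSubgraph.mp hy.snd_mem

lemma Walk.IsCycle.egirth_spanningCoe_toSubgraph {p : G.Walk a a} (hp : p.IsCycle) :
    p.toSubgraph.spanningCoe.egirth = p.length := by
  classical
  set B := p.toSubgraph.spanningCoe
  have hpB : ∀ e ∈ p.edges, e ∈ B.edgeSet := fun e he => by
    rwa [Subgraph.edgeSet_spanningCoe, p.mem_edges_toSubgraph]
  refine le_antisymm (by simpa using egirth_le_length (hp.transfer hpB)) (le_egirth.mpr ?_)
  intro w c hc
  have hw : w ∈ p.support := by
    have := c.adj_snd hc.not_nil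
    exact p.mem_verts_toSubgraph.mp this.fst_mem
  have hsupp : p.support.toFinset ⊆ c.support.toFinset := by
    intro z hz
    rw [List.mem_toFinset] at hz ⊢
    have hreach : B.Walk w z := ((p.transfer B hpB).dropUntil w (by simpa using hw)).append
      ((p.transfer B hpB).takeUntil z (by simpa using hz))
    exact hreach.end_mem_of_forall_adj
      (fun _ _ hxy hx => hp.isCycles_spanningCoe_toSubgraph.mem_support_of_adj hc hxy hx)
      c.start_mem_support
  have := Finset.card_le_card hsupp
  rw [hp.card_toFinset_support, hc.card_toFinset_support] at this
  exact_mod_cast this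

lemma exists_egirth_eq_of_le_card [Fintype V] {g : ℕ} (hg : 3 ≤ g) (hV : g ≤ Fintype.card V) :
    ∃ G : SimpleGraph V, G.egirth = g ∧ ∀ v, (G.neighborSet v).ncard ≤ 2 := by
  obtain ⟨f⟩ :=
    Function.Embedding.nonempty_of_card_le (by simpa using hV : Fintype.card (Fin g) ≤ _)
  obtain ⟨u, p, hp, hlen⟩ := (cycleGraph_isContained_iff hg).mp
    ((IsContained.of_le le_top).trans ⟨(Embedding.completeGraph f).toCopy⟩)
  refine ⟨p.toSubgraph.spanningCoe, hlen ▸ hp.egirth_spanningCoe_toSubgraph, fun v => ?_⟩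
  rcases (p.toSubgraph.spanningCoe.neighborSet v).eq_empty_or_nonempty with h | h
  · simp [h]
  · exact (hp.isCycles_spanningCoe_toSubgraph h).le

lemma ncard_neighborSet_eq_degree [Fintype V] [DecidableRel G.Adj] (v : V) :
    (G.neighborSet v).ncard = G.degree v := by
  rw [Set.ncard_eq_toFinset_card', ← neighborFinset_def, card_neighborFinset_eq_degree]

lemma sum_ncard_neighborSet [Fintype V] :
    ∑ v, (G.neighborSet v).ncard = 2 * G.edgeSet.ncard := by
  classical
  simp_rw [ncard_neighborSet_eq_degree, sum_degrees_eq_twice_card_edges,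
    Set.ncard_eq_toFinset_card' G.edgeSet, edgeFinset]

lemma exists_deficient_pair [Fintype V] [DecidableEq V] {d : ℕ} (hV : Even (Fintype.card V))
    (hdeg : ∀ v, (G.neighborSet v).ncard ≤ d) {w : V} (hw : (G.neighborSet w).ncard < d) :
    ∃ u v, ∀ x,
      (G.neighborSet x).ncard + (if x = u then 1 else 0) + (if x = v then 1 else 0) ≤ d := by
  have hsum : ∑ x, (d - (G.neighborSet x).ncard) + 2 * G.edgeSet.ncard = Fintype.card V * d := by
    rw [← sum_ncard_neighborSet, ← Finset.sum_add_distrib,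
      Finset.sum_congr rfl fun x _ => Nat.sub_add_cancel (hdeg x), Finset.sum_const,
      Finset.card_univ, smul_eq_mul]
  have heven : Even (∑ x, (d - (G.neighborSet x).ncard)) := by
    have := hV.mul_right d
    rw [← hsum] at this
    exact (Nat.even_add.mp this).mpr (even_two_mul _)
  obtain ⟨u, v, h⟩ := exists_pair_le_of_even_sum heven (Nat.sub_pos_of_lt hw)
  exact ⟨u, v, fun x => by have := h x; have := hdeg x; omega⟩

lemma ncard_edgeSet_sup_edge [Finite V] (hab : a ≠ b) (h : ¬G.Adj a b) :
    (G ⊔ edge a b).edgeSet.ncard = G.edgeSet.ncard + 1 := by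
  rw [edgeSet_sup, edgeSet_edge_of_ne hab, Set.union_singleton,
    Set.ncard_insert_of_notMem (show s(a, b) ∉ G.edgeSet from h)]

lemma ncard_edgeSet_deleteEdges_add_one [Finite V] (h : G.Adj a b) :
    (G.deleteEdges {s(a, b)}).edgeSet.ncard + 1 = G.edgeSet.ncard := by
  rw [edgeSet_deleteEdges, Set.ncard_sdiff_singleton_add_one (show s(a, b) ∈ G.edgeSet from h)]

lemma ncard_edgeSet_deleteEdges_sup_edge_sup_edge [Finite V] {u v x y : V} (hxy : G.Adj x y)
    (hux : ¬(G.Adj u x ∨ u = x)) (hvy : ¬(G.Adj v y ∨ v = y)) (hvx : v ≠ x) :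
    (G.deleteEdges {s(x, y)} ⊔ edge u x ⊔ edge v y).edgeSet.ncard = G.edgeSet.ncard + 1 := by
  obtain ⟨hux₁, hux₂⟩ := not_or.mp hux
  obtain ⟨hvy₁, hvy₂⟩ := not_or.mp hvy
  have hvy' : ¬(G.deleteEdges {s(x, y)} ⊔ edge u x).Adj v y := by
    rintro (h | h)
    · exact hvy₁ (deleteEdges_adj.mp h).1
    · rcases (edge_adj _ _ _ _).mp h with ⟨⟨-, rfl⟩ | ⟨rfl, -⟩, -⟩
      exacts [hxy.ne rfl, hvx rfl]
  rw [ncard_edgeSet_sup_edge hvy₂ hvy',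
    ncard_edgeSet_sup_edge hux₂ (fun h => hux₁ (deleteEdges_adj.mp h).1),
    ← ncard_edgeSet_deleteEdges_add_one hxy]

section DecidableEq

variable [DecidableEq V]

lemma ncard_neighborSet_edge_le (w : V) :
    ((edge a b).neighborSet w).ncard ≤ (if w = a then 1 else 0) + (if w = b then 1 else 0) := by
  have hadj : ∀ z, (edge a b).Adj w z → w = a ∧ z = b ∨ w = b ∧ z = a := fun z hz =>
    ((edge_adj _ _ _ _).mp hz).1
  by_cases hwa : w = a
  · have : (edge a b).neighborSet w ⊆ {b} := fun z hz => by
      rcases hadj z hz with ⟨-, rfl⟩ | ⟨rfl, rfl⟩ <;> simp_all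
    rw [if_pos hwa]
    exact ((Set.ncard_le_ncard this).trans (Set.ncard_singleton b).le).trans (Nat.le_add_right _ _)
  by_cases hwb : w = b
  · have : (edge a b).neighborSet w ⊆ {a} := fun z hz => by
      rcases hadj z hz with ⟨rfl, -⟩ | ⟨-, rfl⟩ <;> simp_all
    rw [if_neg hwa, if_pos hwb, zero_add]
    exact (Set.ncard_le_ncard this).trans (Set.ncard_singleton a).le
  · have : (edge a b).neighborSet w = ∅ := Set.eq_empty_of_forall_notMem fun z hz => by
      rcases hadj z hz with ⟨rfl, -⟩ | ⟨rfl, -⟩ <;> simp_all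
    simp [this, hwa, hwb]

lemma ncard_neighborSet_sup_edge_le [Finite V] (w : V) :
    ((G ⊔ edge a b).neighborSet w).ncard ≤
      (G.neighborSet w).ncard + (if w = a then 1 else 0) + (if w = b then 1 else 0) := by
  have h1 := Set.ncard_union_le (G.neighborSet w) ((edge a b).neighborSet w)
  have h2 := ncard_neighborSet_edge_le (a := a) (b := b) w
  rw [neighborSet_sup]
  omega

lemma ncard_neighborSet_deleteEdges_add_le [Finite V] (hab : G.Adj a b) (w : V) :
    ((G.deleteEdges {s(a, b)}).neighborSet w).ncard + (if w = a then 1 else 0)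
      + (if w = b then 1 else 0) ≤ (G.neighborSet w).ncard := by
  by_cases hwa : w = a
  · subst hwa
    have : (G.deleteEdges {s(w, b)}).neighborSet w = G.neighborSet w \ {b} := by
      ext z; simp [hab.ne.symm, eq_comm]
    simp [this, hab.ne, Set.ncard_sdiff_singleton_add_one (show b ∈ G.neighborSet w from hab)]
  by_cases hwb : w = b
  · subst hwb
    have : (G.deleteEdges {s(a, w)}).neighborSet w = G.neighborSet w \ {a} := by
      ext z; simp [hab.ne, eq_comm]
    simp [this, hwa, Set.ncard_sdiff_singleton_add_one (show a ∈ G.neighborSet w from hab.symm)]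
  · rw [if_neg hwa, if_neg hwb]
    exact Set.ncard_le_ncard fun z hz => hz.1

lemma ncard_neighborSet_deleteEdges_sup_edge_sup_edge_le [Finite V] {u v x y : V}
    (hxy : G.Adj x y) (w : V) :
    ((G.deleteEdges {s(x, y)} ⊔ edge u x ⊔ edge v y).neighborSet w).ncard ≤
      (G.neighborSet w).ncard + (if w = u then 1 else 0) + (if w = v then 1 else 0) := by
  have h2 :=
    ncard_neighborSet_sup_edge_le (G := G.deleteEdges {s(x, y)} ⊔ edge u x) (a := v) (b := y) w
  have h1 := ncard_neighborSet_sup_edge_le (G := G.deleteEdges {s(x, y)}) (a := u) (b := x) w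
  have h0 := ncard_neighborSet_deleteEdges_add_le hxy w
  omega

end DecidableEq

lemma ncard_ball_le [Finite V] {d : ℕ} (hdeg : ∀ v, (G.neighborSet v).ncard ≤ d)
    (c : V) (k : ℕ) : (G.ball c k).ncard ≤ (d + 1) ^ k := by
  induction k generalizing c with
  | zero => simp [ball_zero]
  | succ k ih =>
    have hN := (G.neighborSet c).toFinite
    have hsub : G.ball c (k + 1 : ℕ) ⊆ insert c (⋃ z ∈ hN.toFinset, G.ball z k) := by
      intro v hv
      rw [mem_ball, edist_comm] at hv
      obtain ⟨p, hp⟩ := exists_walk_of_edist_ne_top (ne_top_of_lt hv)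
      cases p with
      | nil => exact Set.mem_insert _ _
      | cons h q =>
        refine Set.mem_insert_of_mem _ (Set.mem_biUnion (hN.mem_toFinset.mpr h) ?_)
        rw [mem_ball, edist_comm]
        refine (edist_le q).trans_lt ?_
        have hlt : (Walk.cons h q).length < k + 1 := by exact_mod_cast hp ▸ hv
        rw [Walk.length_cons] at hlt
        exact_mod_cast Nat.lt_of_succ_lt_succ hlt
    have hsum : ∑ z ∈ hN.toFinset, (G.ball z k).ncard ≤ d * (d + 1) ^ k := by
      refine (Finset.sum_le_card_nsmul _ _ _ fun z _ => ih z).trans ?_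
      rw [smul_eq_mul, ← Set.ncard_eq_toFinset_card _ hN]
      exact Nat.mul_le_mul_right _ (hdeg c)
    calc (G.ball c (k + 1 : ℕ)).ncard
        ≤ (⋃ z ∈ hN.toFinset, G.ball z k).ncard + 1 :=
          (Set.ncard_le_ncard hsub).trans (Set.ncard_insert_le _ _)
      _ ≤ d * (d + 1) ^ k + (d + 1) ^ k :=
          add_le_add ((hN.toFinset.set_ncard_biUnion_le _).trans hsum)
            (Nat.one_le_pow _ _ (by omega))
      _ = (d + 1) ^ (k + 1) := by ring

lemma exists_le_edist_of_card_lt [Finite V] {d : ℕ} (hdeg : ∀ v, (G.neighborSet v).ncard ≤ d)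
    (u v : V) (S : Set V) (k : ℕ) (hcard : 2 * (d + 1) ^ k + S.ncard < Nat.card V) :
    ∃ x ∉ S, (k : ℕ∞) ≤ G.edist u x ∧ (k : ℕ∞) ≤ G.edist v x := by
  have hne : G.ball u k ∪ G.ball v k ∪ S ≠ Set.univ := by
    intro h
    have h1 := Set.ncard_union_le (G.ball u k ∪ G.ball v k) S
    have h2 := Set.ncard_union_le (G.ball u k) (G.ball v k)
    rw [h, Set.ncard_univ] at h1
    have := ncard_ball_le hdeg u k
    have := ncard_ball_le hdeg v k
    omega
  obtain ⟨x, hx⟩ := (Set.ne_univ_iff_exists_notMem _).mp hne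
  simp only [Set.mem_union, not_or, mem_ball, not_lt] at hx
  exact ⟨x, hx.2, edist_comm ▸ hx.1.1, edist_comm ▸ hx.1.2⟩

lemma exists_lt_ncard_edgeSet_of_far [Finite V] [DecidableEq V] {d g : ℕ} (hg : 3 ≤ g)
    (hG : G.egirth = g) {w : V} {c : G.Walk w w} (hc : c.IsCycle) (hlen : G.egirth = c.length)
    {u v x : V}
    (huv : ∀ z,
      (G.neighborSet z).ncard + (if z = u then 1 else 0) + (if z = v then 1 else 0) ≤ d)
    (hxc : x ∉ c.support) (hux : (g : ℕ∞) ≤ G.edist u x)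
    (hvx : (g : ℕ∞) ≤ G.edist v x) :
    ∃ G' : SimpleGraph V, (G'.egirth = g ∧ ∀ z, (G'.neighborSet z).ncard ≤ d) ∧
      G.edgeSet.ncard < G'.edgeSet.ncard := by
  have hfar : ∀ z z', (g : ℕ∞) ≤ G.edist z z' + 1 → ¬(G.Adj z z' ∨ z = z') := by
    intro z z' h hzz'
    have : (g : ℕ∞) ≤ 2 := h.trans (add_le_add_left (edist_le_one_iff_adj_or_eq.mpr hzz') 1)
    exact absurd (by exact_mod_cast this : g ≤ 2) (by omega)
  have hux' := hfar u x (hux.trans le_self_add)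
  by_cases hx : (G.neighborSet x).ncard < d
  · refine ⟨G ⊔ edge u x, ⟨?_, fun z => ?_⟩, ?_⟩
    · rw [egirth_sup_edge (hG ▸ hux.trans le_self_add), hG]
    · have h1 := ncard_neighborSet_sup_edge_le (G := G) (a := u) (b := x) z
      have h2 := huv z
      by_cases hzx : z = x
      · subst hzx
        rw [if_neg fun h => hux' (Or.inr h.symm), if_pos rfl] at h1
        omega
      · rw [if_neg hzx] at h1
        omega
    · rw [ncard_edgeSet_sup_edge (fun h => hux' (Or.inr h)) (fun h => hux' (Or.inl h))]
      omega
  obtain ⟨y, hy⟩ : (G.neighborSet x).Nonempty :=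
    Set.nonempty_of_ncard_ne_zero (by have := huv u; rw [if_pos rfl] at this; omega)
  have hxy : s(x, y) ∉ c.edges := fun h => hxc (c.fst_mem_support_of_mem_edges h)
  refine ⟨G.deleteEdges {s(x, y)} ⊔ edge u x ⊔ edge v y, ⟨?_, fun z => ?_⟩, ?_⟩
  · rw [egirth_deleteEdges_sup_edge_sup_edge hy (egirth_deleteEdges_eq hc hlen hxy)
      (hG ▸ hux) (hG ▸ hvx), hG]
  · exact (ncard_neighborSet_deleteEdges_sup_edge_sup_edge_le hy z).trans (huv z)
  · rw [ncard_edgeSet_deleteEdges_sup_edge_sup_edge hy hux'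
      (hfar v y (hvx.trans (edist_le_edist_add_one_of_adj hy.symm v)))
      (fun h => hfar v x (hvx.trans le_self_add) (Or.inr h))]
    omega

lemma exists_lt_ncard_edgeSet [Fintype V] [DecidableEq V] {d g : ℕ} (hg : 3 ≤ g)
    (hcard : 2 * (d + 1) ^ g + g < Fintype.card V) (hG : G.egirth = g) {u v : V}
    (huv : ∀ z,
      (G.neighborSet z).ncard + (if z = u then 1 else 0) + (if z = v then 1 else 0) ≤ d) :
    ∃ G' : SimpleGraph V, (G'.egirth = g ∧ ∀ z, (G'.neighborSet z).ncard ≤ d) ∧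
      G.edgeSet.ncard < G'.edgeSet.ncard := by
  obtain ⟨w, c, hc, hlen⟩ := exists_egirth_eq_length.mpr
    (by rw [← egirth_eq_top, hG]; exact ENat.natCast_ne_top g)
  have hdeg : ∀ z, (G.neighborSet z).ncard ≤ d := fun z => by have := huv z; omega
  obtain ⟨x, hxc, hux, hvx⟩ := exists_le_edist_of_card_lt hdeg u v c.support.toFinset g (by
    rw [Set.ncard_coe_finset, hc.card_toFinset_support, Nat.card_eq_fintype_card]
    have : c.length = g := by exact_mod_cast hlen.symm.trans hG
    omega)
  exact exists_lt_ncard_edgeSet_of_far hg hG hc hlen huv (by simpa using hxc) hux hvx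

end SimpleGraph

/-- Erdős–Sachs: for all `d ≥ 2` and `g ≥ 3` there exists a `d`-regular
(finite simple) graph with girth exactly `g`. -/
theorem stmt_14 (d g : ℕ) (hd : 2 ≤ d) (hg : 3 ≤ g) :
    ∃ (n : ℕ) (G : SimpleGraph (Fin n)) (_ : DecidableRel G.Adj),
      G.IsRegularOfDegree d ∧ G.girth = g := by
  classical
  set n := 2 * ((d + 1) ^ g + g)
  have hcard : 2 * (d + 1) ^ g + g < Fintype.card (Fin n) := by
    have := Nat.one_le_pow g (d + 1) (by omega)
    rw [Fintype.card_fin]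
    omega
  obtain ⟨B, hB, hBdeg⟩ := SimpleGraph.exists_egirth_eq_of_le_card (V := Fin n) hg (by omega)
  obtain ⟨G, ⟨hG, hGdeg⟩, hmax⟩ := Set.exists_max_image
    {G : SimpleGraph (Fin n) | G.egirth = g ∧ ∀ v, (G.neighborSet v).ncard ≤ d}
    (fun G => G.edgeSet.ncard) (Set.toFinite _) ⟨B, hB, fun v => (hBdeg v).trans hd⟩
  have hreg : ∀ v, (G.neighborSet v).ncard = d := by
    by_contra! ⟨w, hw⟩
    obtain ⟨u, v, huv⟩ :=
      SimpleGraph.exists_deficient_pair (by simp [n]) hGdeg ((hGdeg w).lt_of_ne hw)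
    obtain ⟨G', hG', hlt⟩ := SimpleGraph.exists_lt_ncard_edgeSet hg hcard hG huv
    exact (hmax G' hG').not_gt hlt
  refine ⟨n, G, inferInstance, fun v => ?_, by simp [SimpleGraph.girth, hG]⟩
  rw [← SimpleGraph.ncard_neighborSet_eq_degree]
  exact hreg v
end

section
/- For every ℓ ≥ 1, every integer k ≥ 1 and every oriented tree T with k edges such that Δ⁺(T) = Δ(T), there exists an oriented graph D with girth at least 2ℓ+1 and minimum semidegree δ⁰(D) = Δ(T) - 1 that does not contain T, provided Δ(T) ≥ 2. In particular, the condition δ⁰(D) ≥ Δ(T) in the main theorem cannot be weakened to δ⁰(D) ≥ Δ(T) - 1. -/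
/-!
Take the Cayley digraph of a finite group `Γ` with respect to `Δ - 1` generators `gᵢ`, with arcs
`u → u * gᵢ`. All in- and out-degrees are `Δ - 1`, so no vertex can host the vertex of `T` of
out-degree `Δ`. Reading the labels along a cycle gives a reduced word of the same length in the
free group that is trivial in `Γ`; hence the girth exceeds `2ℓ` as soon as no nontrivial word of
length `≤ 2ℓ` dies in `Γ`. Such a `Γ` is `SL(2, ℤ/n)` for large `n`: the matrices `Aᶜ B A⁻ᶜ`,
with `A`, `B` the elementary matrices with off-diagonal entry `2`, freely generate a subgroup of
`SL(2, ℤ)` by ping-pong, and reduction modulo a large `n` is injective on the finitely many images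
of words of length `≤ 2ℓ`.
-/

namespace FreeGroup

variable {ι G : Type*} [Group G]

theorem mk_singleton_eq_inv {x y : ι × Bool} (h₁ : x.1 = y.1) (h₂ : x.2 ≠ y.2) :
    mk [y] = (mk [x])⁻¹ := by
  obtain ⟨i, b⟩ := x
  obtain ⟨j, c⟩ := y
  simp only at h₁ h₂
  subst h₁
  simp [inv_mk, invRev, Bool.eq_not.2 h₂.symm]

variable [DecidableEq ι]

theorem of_ne_inv_of (i j : ι) : of i ≠ (of j)⁻¹ := fun h => by
  simpa [invRev] using congrArg toWord h

theorem finite_setOf_norm_le [Finite ι] (m : ℕ) : {x : FreeGroup ι | x.norm ≤ m}.Finite :=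
  (List.finite_length_le _ m).preimage toWord_injective.injOn

def NoShortRelator (φ : FreeGroup ι →* G) (m : ℕ) : Prop :=
  ∀ x : FreeGroup ι, x.norm ≤ m → φ x = 1 → x = 1

namespace NoShortRelator

variable {φ : FreeGroup ι →* G} {m : ℕ}

theorem mono (hφ : NoShortRelator φ m) {k : ℕ} (hk : k ≤ m) : NoShortRelator φ k :=
  fun x hx => hφ x (hx.trans hk)

theorem eq_of_map_eq (hφ : NoShortRelator φ m) {x y : FreeGroup ι} (hxy : x.norm + y.norm ≤ m)
    (h : φ x = φ y) : x = y := by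
  refine mul_inv_eq_one.1 (hφ _ ?_ (by rw [_root_.map_mul, _root_.map_inv, h, mul_inv_cancel]))
  exact (norm_mul_le x y⁻¹).trans (by rwa [norm_inv_eq])

end NoShortRelator

end FreeGroup

open Matrix MatrixGroups in
theorem Matrix.SpecialLinearGroup.smul_fin_two_apply {R : Type*} [CommRing R] (g : SL(2, R))
    (v : Fin 2 → R) (i : Fin 2) : (g • v) i = g i 0 * v 0 + g i 1 * v 1 := by
  change ((g : Matrix (Fin 2) (Fin 2) R) *ᵥ v) i = _
  simp [mulVec, dotProduct, Fin.sum_univ_two]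

namespace Sanov

open Matrix MatrixGroups

/-- The conjugate of `!![1, 0; 2, 1]` by `!![1, 2c; 0, 1]`. In the coordinates
`(shift c v, v 1)` it acts as the transvection `(s, t) ↦ (s, t + 2s)`. -/
def gen (c : ℤ) : SL(2, ℤ) :=
  ⟨!![1 + 4 * c, -8 * c ^ 2; 2, 1 - 4 * c], by simp [det_fin_two_of]; ring⟩

def shift (c : ℤ) (v : Fin 2 → ℤ) : ℤ := v 0 - 2 * c * v 1

lemma gen_smul (c : ℤ) (v : Fin 2 → ℤ) :
    shift c (gen c • v) = shift c v ∧ (gen c • v) 1 = v 1 + 2 * shift c v := by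
  simp only [shift, SpecialLinearGroup.smul_fin_two_apply]
  simp only [gen, of_apply, cons_val', cons_val_zero, cons_val_one, cons_val_fin_one]
  constructor <;> ring

lemma gen_inv_smul (c : ℤ) (v : Fin 2 → ℤ) :
    shift c ((gen c)⁻¹ • v) = shift c v ∧ ((gen c)⁻¹ • v) 1 = v 1 - 2 * shift c v := by
  obtain ⟨h₀, h₁⟩ := gen_smul c ((gen c)⁻¹ • v)
  rw [smul_inv_smul] at h₀ h₁
  constructor <;> linarith

/-- The ping-pong takes place on nonzero vectors, since `0` is fixed by every matrix. -/
def nonzeroVectors : SubMulAction SL(2, ℤ) (Fin 2 → ℤ) where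
  carrier := {v | v ≠ 0}
  smul_mem' g _ hv := (smul_ne_zero_iff_ne g).2 hv

/-- In terms of the slope `r = v 0 / v 1`, `X c` is `2c ≤ r ≤ 2c + 1` and `Y c` is
`2c - 1 < r < 2c`; these intervals are pairwise disjoint. -/
def X (c : ℤ) : Set nonzeroVectors := {v | shift c v ^ 2 ≤ shift c v * (v : Fin 2 → ℤ) 1}

def Y (c : ℤ) : Set nonzeroVectors := {v | shift c v * (v : Fin 2 → ℤ) 1 < -shift c v ^ 2}

lemma apply_one_ne_zero {c : ℤ} {v : nonzeroVectors} (hv : v ∈ X c ∪ Y c) :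
    (v : Fin 2 → ℤ) 1 ≠ 0 := by
  intro h
  have h0 : (v : Fin 2 → ℤ) 0 = 0 := by
    rcases hv with hv | hv <;> simp only [X, Y, Set.mem_ofPred_eq, shift, h] at hv <;>
      nlinarith [sq_nonneg ((v : Fin 2 → ℤ) 0)]
  exact v.2 (funext fun i => by fin_cases i <;> simp [h0, h])

lemma shift_mul_mem_Ioc {c : ℤ} {v : nonzeroVectors} (hv : v ∈ X c ∪ Y c) :
    shift c v * (v : Fin 2 → ℤ) 1 ∈
      Set.Ioc (-(v : Fin 2 → ℤ) 1 ^ 2) ((v : Fin 2 → ℤ) 1 ^ 2) := by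
  have h1 := apply_one_ne_zero hv
  rcases hv with hv | hv <;> simp only [X, Y, Set.mem_ofPred_eq] at hv <;>
    constructor <;> nlinarith [sq_nonneg (shift c v - (v : Fin 2 → ℤ) 1),
      sq_nonneg (shift c v + (v : Fin 2 → ℤ) 1), pow_pos (abs_pos.2 h1) 2,
      sq_abs ((v : Fin 2 → ℤ) 1)]

lemma eq_of_mem_X_union_Y {c d : ℤ} {v : nonzeroVectors} (hc : v ∈ X c ∪ Y c)
    (hd : v ∈ X d ∪ Y d) : c = d := by
  have hpos : 0 < (v : Fin 2 → ℤ) 1 ^ 2 := by have := apply_one_ne_zero hc; positivity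
  have hshift : shift d v * (v : Fin 2 → ℤ) 1 =
      shift c v * (v : Fin 2 → ℤ) 1 + 2 * (c - d) * (v : Fin 2 → ℤ) 1 ^ 2 := by
    simp only [shift]; ring
  obtain ⟨hc₁, hc₂⟩ := shift_mul_mem_Ioc hc
  obtain ⟨hd₁, hd₂⟩ := shift_mul_mem_Ioc hd
  rcases lt_trichotomy c d with h | h | h
  · nlinarith
  · exact h
  · nlinarith

open Pointwise in
theorem injective_lift_gen : Function.Injective (FreeGroup.lift gen) := by
  refine FreeGroup.injective_lift_of_ping_pong gen X Y (fun c => ?_) ?_ ?_ ?_ ?_ ?_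
  · refine ⟨⟨![2 * c, 1], fun h => by simpa using congrFun h 1⟩, ?_⟩
    simp [X, shift]
  · intro c d hcd
    exact Set.disjoint_left.2 fun v hc hd => hcd (eq_of_mem_X_union_Y (.inl hc) (.inl hd))
  · intro c d hcd
    exact Set.disjoint_left.2 fun v hc hd => hcd (eq_of_mem_X_union_Y (.inr hc) (.inr hd))
  · intro c d
    refine Set.disjoint_left.2 fun v hc hd => ?_
    obtain rfl := eq_of_mem_X_union_Y (.inl hc) (.inr hd)
    simp only [X, Y, Set.mem_ofPred_eq] at hc hd
    nlinarith [sq_nonneg (shift c v)]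
  · rintro c _ ⟨v, hv, rfl⟩
    simp only [X, Y, Set.mem_compl_iff, Set.mem_ofPred_eq, not_lt] at hv ⊢
    rw [SubMulAction.val_smul, (gen_smul c v).1, (gen_smul c v).2]
    nlinarith
  · rintro c _ ⟨v, hv, rfl⟩
    simp only [X, Y, Set.mem_compl_iff, Set.mem_ofPred_eq, not_le] at hv ⊢
    rw [Pi.inv_apply, SubMulAction.val_smul, (gen_inv_smul c v).1, (gen_inv_smul c v).2]
    nlinarith

end Sanov

theorem Int.exists_intCast_zmod_injOn {S : Set ℤ} (hS : S.Finite) :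
    ∃ n : ℕ, n ≠ 0 ∧ S.InjOn (Int.cast : ℤ → ZMod n) := by
  obtain ⟨M, hM⟩ := (hS.image Int.natAbs).exists_le
  refine ⟨2 * M + 1, by omega, fun a ha b hb hab => ?_⟩
  rw [ZMod.intCast_eq_intCast_iff_dvd_sub] at hab
  have hlt : (b - a).natAbs < ((2 * M + 1 : ℕ) : ℤ).natAbs := by
    have := hM _ ⟨a, ha, rfl⟩
    have := hM _ ⟨b, hb, rfl⟩
    omega
  linarith [Int.eq_zero_of_dvd_of_natAbs_lt_natAbs hab hlt]

theorem Matrix.SpecialLinearGroup.exists_map_zmod_injOn {m : Type*} [Fintype m] [DecidableEq m]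
    {S : Set (SpecialLinearGroup m ℤ)} (hS : S.Finite) :
    ∃ n : ℕ, NeZero n ∧ S.InjOn (SpecialLinearGroup.map (Int.castRingHom (ZMod n))) := by
  let entries : Set ℤ :=
    (fun x : SpecialLinearGroup m ℤ × m × m => x.1 x.2.1 x.2.2) '' (S ×ˢ Set.univ)
  obtain ⟨n, hn, hinj⟩ :=
    Int.exists_intCast_zmod_injOn ((hS.prod Set.finite_univ).image _ : entries.Finite)
  refine ⟨n, ⟨hn⟩, fun g hg h hh hgh => Subtype.ext (Matrix.ext fun i j => ?_)⟩
  have := congrArg (fun k : SpecialLinearGroup m (ZMod n) => k i j) hgh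
  simp only [map_apply_coe, RingHom.mapMatrix_apply, Matrix.map_apply, eq_intCast] at this
  exact hinj ⟨(g, i, j), ⟨hg, trivial⟩, rfl⟩ ⟨(h, i, j), ⟨hh, trivial⟩, rfl⟩ this

theorem FreeGroup.exists_finite_noShortRelator (ι : Type*) [Finite ι] [DecidableEq ι] (m : ℕ) :
    ∃ (Γ : Type) (_ : Group Γ) (_ : Finite Γ) (φ : FreeGroup ι →* Γ), NoShortRelator φ m := by
  obtain ⟨f, hf⟩ := Countable.exists_injective_nat ι
  let ψ : FreeGroup ι →* Matrix.SpecialLinearGroup (Fin 2) ℤ :=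
    (lift Sanov.gen).comp (map fun i => (f i : ℤ))
  have hψ : Function.Injective ψ :=
    Sanov.injective_lift_gen.comp (map_injective (Nat.cast_injective.comp hf))
  obtain ⟨n, _, hinj⟩ := Matrix.SpecialLinearGroup.exists_map_zmod_injOn
    ((finite_setOf_norm_le m).image ψ)
  refine ⟨_, inferInstance, inferInstance,
    (Matrix.SpecialLinearGroup.map (Int.castRingHom (ZMod n))).comp ψ, fun x hx h1 => ?_⟩
  refine hψ (hinj ⟨x, hx, rfl⟩ ⟨1, by simp, rfl⟩ ?_)
  simpa using h1

namespace SimpleGraph.Walk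

variable {Γ ι : Type*} [Group Γ] {G : SimpleGraph Γ} (lab : ∀ u v, G.Adj u v → ι × Bool)

def readWord {u v : Γ} (w : G.Walk u v) : List (ι × Bool) := w.darts.map fun d => lab _ _ d.adj

variable {lab} {φ : FreeGroup ι →* Γ} (hlab : ∀ u v h, u * φ (FreeGroup.mk [lab u v h]) = v)
include hlab

theorem mul_map_mk_readWord {u v : Γ} (w : G.Walk u v) :
    u * φ (FreeGroup.mk (w.readWord lab)) = v := by
  induction w with
  | nil => simp [readWord, ← FreeGroup.one_eq_mk]
  | cons h p ih =>
    rw [readWord, darts_cons, List.map_cons, ← List.singleton_append, ← FreeGroup.mul_mk,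
      _root_.map_mul, ← mul_assoc, hlab]
    exact ih

/-- A reduction `x x⁻¹` in the word would mean that the trail steps straight back along the
edge it just used. -/
theorem isReduced_readWord {u v : Γ} {w : G.Walk u v} (hw : w.IsTrail) :
    FreeGroup.IsReduced (w.readWord lab) := by
  rw [readWord, FreeGroup.IsReduced, List.isChain_map,
    List.isChain_iff_forall_rel_of_append_cons_cons]
  intro d d' l₁ l₂ hsplit h₁
  by_contra h₂
  have hadj : G.DartAdj d d' :=
    List.isChain_iff_forall_rel_of_append_cons_cons.1 w.isChain_dartAdj_darts hsplit
  have hne : d.edge ≠ d'.edge := List.isChain_iff_forall_rel_of_append_cons_cons.1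
    hw.edges_nodup.isChain (l₁ := l₁.map Dart.edge) (l₂ := l₂.map Dart.edge)
    (by simp [edges, hsplit])
  have hback : d'.snd = d.fst := by
    rw [← hlab _ _ d'.adj, FreeGroup.mk_singleton_eq_inv h₁ h₂, _root_.map_inv, ← hadj]
    exact mul_inv_eq_of_eq_mul (hlab _ _ d.adj).symm
  exact hne ((dart_edge_eq_iff d d').2 (Or.inr (Dart.ext _ _ (Prod.ext hback.symm hadj))))

end SimpleGraph.Walk

theorem FreeGroup.NoShortRelator.lt_egirth {Γ ι : Type*} [Group Γ] [DecidableEq ι]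
    {φ : FreeGroup ι →* Γ} {m : ℕ} (hφ : NoShortRelator φ m) {G : SimpleGraph Γ}
    (hG : ∀ u v, G.Adj u v → ∃ x : ι × Bool, u * φ (mk [x]) = v) :
    (m : ℕ∞) < G.egirth := by
  choose lab hlab using hG
  rw [← ENat.add_one_le_iff (ENat.natCast_ne_top m), SimpleGraph.le_egirth]
  intro u w hw
  by_contra hlen
  have hword : mk (w.readWord lab) = 1 := by
    refine hφ _ (norm_mk_le.trans ?_) (mul_eq_left.1 (w.mul_map_mk_readWord hlab))
    rw [SimpleGraph.Walk.readWord, List.length_map, SimpleGraph.Walk.length_darts]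
    exact_mod_cast Order.le_of_lt_add_one (not_le.1 hlen)
  have hnil : w.readWord lab = [] := by
    rw [← (SimpleGraph.Walk.isReduced_readWord hlab hw.isTrail).reduce_eq, ← toWord_mk, hword,
      toWord_one]
  have := congrArg List.length hnil
  rw [SimpleGraph.Walk.readWord, List.length_map, SimpleGraph.Walk.length_darts,
    List.length_nil] at this
  have := hw.three_le_length
  omega

def cayleyArc {Γ ι : Type*} [Mul Γ] (g : ι → Γ) (u v : Γ) : Prop := ∃ i, u * g i = v

namespace FreeGroup.NoShortRelator

variable {Γ ι : Type*} [Group Γ] [DecidableEq ι] {φ : FreeGroup ι →* Γ} {m : ℕ}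

theorem not_cayleyArc_self (hφ : NoShortRelator φ 1) (u : Γ) :
    ¬ cayleyArc (fun i => φ (of i)) u u := fun ⟨i, hi⟩ =>
  of_ne_one i (hφ _ (by simp) (mul_eq_left.1 hi))

theorem cayleyArc_asymm (hφ : NoShortRelator φ 2) {u v : Γ}
    (huv : cayleyArc (fun i => φ (of i)) u v) : ¬ cayleyArc (fun i => φ (of i)) v u := by
  rintro ⟨j, rfl⟩
  obtain ⟨i, hi⟩ := huv
  refine of_ne_inv_of j i (hφ.eq_of_map_eq (by simp) ?_)
  rw [_root_.map_inv, eq_inv_iff_mul_eq_one]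
  simpa [mul_assoc] using hi

theorem injective_map_of (hφ : NoShortRelator φ 2) : Function.Injective fun i => φ (of i) :=
  fun i j h => of_injective (hφ.eq_of_map_eq (by simp) h)

theorem ncard_cayleyArc_out [Finite ι] (hφ : NoShortRelator φ 2) (u : Γ) :
    {v | cayleyArc (fun i => φ (of i)) u v}.ncard = Nat.card ι :=
  Set.ncard_range_of_injective ((mul_right_injective u).comp hφ.injective_map_of)

theorem ncard_cayleyArc_in [Finite ι] (hφ : NoShortRelator φ 2) (u : Γ) :
    {v | cayleyArc (fun i => φ (of i)) v u}.ncard = Nat.card ι := by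
  have : {v | cayleyArc (fun i => φ (of i)) v u} = Set.range fun i => u * (φ (of i))⁻¹ := by
    ext v
    simp only [cayleyArc, Set.mem_ofPred_eq, Set.mem_range, eq_mul_inv_iff_mul_eq, eq_comm]
  rw [this]
  exact Set.ncard_range_of_injective
    ((mul_right_injective u).comp (inv_injective.comp hφ.injective_map_of))

theorem lt_egirth_cayleyArc (hφ : NoShortRelator φ m) :
    (m : ℕ∞) < (SimpleGraph.fromRel (cayleyArc fun i => φ (of i))).egirth := by
  refine hφ.lt_egirth fun u v huv => ?_
  rcases (SimpleGraph.fromRel_adj _ u v).1 huv with ⟨-, ⟨i, hi⟩ | ⟨i, hi⟩⟩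
  · exact ⟨(i, true), hi⟩
  · refine ⟨(i, false), ?_⟩
    rw [mk_singleton_eq_inv (x := (i, true)) (y := (i, false)) rfl (by simp), _root_.map_inv,
      ← hi]
    exact mul_inv_cancel_right _ _

end FreeGroup.NoShortRelator

theorem Set.ncard_setOf_comp_equiv_symm {V : Type*} {n : ℕ} (e : V ≃ Fin n) (p : V → Prop) :
    {u | p (e.symm u)}.ncard = {v | p v}.ncard :=
  Set.ncard_preimage_of_injective_subset_range e.symm.injective
    (e.symm.range_eq_univ ▸ Set.subset_univ _)

theorem exists_oriented_diregular_lt_egirth (d m : ℕ) (hm : 2 ≤ m) :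
    ∃ (n : ℕ) (A : Fin n → Fin n → Bool),
      (∀ v, ¬ A v v) ∧
      (∀ u v, A u v → ¬ A v u) ∧
      (m : ℕ∞) < (SimpleGraph.fromRel fun u v => A u v = true).egirth ∧
      (∀ v, (Finset.univ.filter fun u => A v u).card = d ∧
        (Finset.univ.filter fun u => A u v).card = d) := by
  classical
  obtain ⟨Γ, _, _, φ, hφ⟩ := FreeGroup.exists_finite_noShortRelator (Fin d) m
  obtain ⟨n, ⟨e⟩⟩ := Finite.exists_equiv_fin Γ
  let R := cayleyArc fun i => φ (FreeGroup.of i)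
  have hφ₂ := hφ.mono hm
  refine ⟨n, fun u v => R (e.symm u) (e.symm v), fun v => ?_, fun u v => ?_, ?_, fun v => ?_⟩
  · simpa using (hφ₂.mono one_le_two).not_cayleyArc_self (e.symm v)
  · simpa using hφ₂.cayleyArc_asymm
  · let iso :
        SimpleGraph.fromRel (fun u v => R (e.symm u) (e.symm v)) ≃g SimpleGraph.fromRel R :=
      { e.symm with map_rel_iff' := by simp }
    simpa [iso.egirth_eq] using hφ.lt_egirth_cayleyArc
  · simp only [decide_eq_true_eq, ← Set.ncard_coe_finset, Finset.coe_filter, Finset.mem_univ,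
      true_and]
    rw [Set.ncard_setOf_comp_equiv_symm e (R (e.symm v)),
      Set.ncard_setOf_comp_equiv_symm e (R · (e.symm v)), hφ₂.ncard_cayleyArc_out,
      hφ₂.ncard_cayleyArc_in, Nat.card_eq_fintype_card, Fintype.card_fin]
    exact ⟨rfl, rfl⟩

theorem Finset.card_filter_le_of_injective_hom {W V : Type*} [Fintype W] [Fintype V]
    {R : W → W → Prop} {S : V → V → Prop} [DecidableRel R] [DecidableRel S] {f : W → V}
    (hf : Function.Injective f) (hRS : ∀ u v, R u v → S (f u) (f v)) (w : W) :
    (univ.filter fun u => R w u).card ≤ (univ.filter fun v => S (f w) v).card :=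
  card_le_card_of_injOn f (fun u hu => by simpa using hRS w u (by simpa using hu)) hf.injOn

theorem stmt_16_general {W : Type*} [Fintype W]
    (ℓ Δ : ℕ) (hℓ : 1 ≤ ℓ) (hΔ : 2 ≤ Δ)
    (Tarc : W → W → Prop) [DecidableRel Tarc]
    (hΔplus : ∃ w : W, (Finset.univ.filter fun u => Tarc w u).card = Δ) :
    ∃ (n : ℕ) (A : Fin n → Fin n → Bool),
      (∀ v, ¬ A v v) ∧
      (∀ u v, A u v → ¬ A v u) ∧
      (2 * ℓ : ℕ∞) < (SimpleGraph.fromRel fun u v => A u v = true).egirth ∧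
      (∀ v, (Finset.univ.filter fun u => A v u).card = Δ - 1 ∧
        (Finset.univ.filter fun u => A u v).card = Δ - 1) ∧
      ¬ ∃ f : W → Fin n, Function.Injective f ∧ ∀ u v, Tarc u v → A (f u) (f v) := by
  obtain ⟨n, A, hirr, hasymm, hgirth, hdeg⟩ :=
    exists_oriented_diregular_lt_egirth (Δ - 1) (2 * ℓ) (by omega)
  refine ⟨n, A, hirr, hasymm, by exact_mod_cast hgirth, hdeg, ?_⟩
  rintro ⟨f, hf, hfT⟩
  obtain ⟨w, hw⟩ := hΔplus
  have := Finset.card_filter_le_of_injective_hom (S := fun a b => A a b) hf hfT w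
  rw [hw, (hdeg (f w)).1] at this
  omega

/-- sharpness of the semidegree condition: for every `ℓ ≥ 1`, `k ≥ 1` and
every oriented tree `T` with `k` edges such that `Δ⁺(T) = Δ(T) ≥ 2`, there is an oriented
graph `D` whose underlying graph has girth at least `2ℓ+1`, all of whose in- and out-degrees
equal `Δ(T) - 1` (so `δ⁰(D) = Δ(T) - 1`), and which does not contain `T`. -/
theorem stmt_16 {W : Type*} [Fintype W] [DecidableEq W]
    (ℓ k Δ : ℕ) (hℓ : 1 ≤ ℓ) (hk : 1 ≤ k) (hΔ : 2 ≤ Δ)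
    (Tarc : W → W → Prop) [DecidableRel Tarc]
    (hTirr : ∀ w, ¬ Tarc w w) (hTorient : ∀ u v, Tarc u v → ¬ Tarc v u)
    (hTree : (SimpleGraph.fromRel Tarc).IsTree)
    (hTk : Fintype.card W = k + 1)
    (hΔmax : ∀ w : W, (Finset.univ.filter fun u => Tarc w u ∨ Tarc u w).card ≤ Δ)
    (hΔplus : ∃ w : W, (Finset.univ.filter fun u => Tarc w u).card = Δ) :
    ∃ (n : ℕ) (A : Fin n → Fin n → Bool),
      (∀ v, ¬ A v v) ∧
      (∀ u v, A u v → ¬ A v u) ∧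
      (2 * ℓ : ℕ∞) < (SimpleGraph.fromRel fun u v => A u v = true).egirth ∧
      (∀ v, (Finset.univ.filter fun u => A v u).card = Δ - 1 ∧
        (Finset.univ.filter fun u => A u v).card = Δ - 1) ∧
      ¬ ∃ f : W → Fin n, Function.Injective f ∧ ∀ u v, Tarc u v → A (f u) (f v) :=
  stmt_16_general ℓ Δ hℓ hΔ Tarc hΔplus
end
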